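/- Let n be an even positive integer, ℓ ≥ 1, and let ψ : (0,∞) → ℝ satisfy 0 ≤ ψ(t) and ψ(t) = o(t) as t → ∞. With k̃_ℓ(r,t) = t k_{ℓ+1}(√(t²−r²)/2) − 2 k_ℓ(√(t²−r²)/2), one has k̃_ℓ(ψ(t),t) = (2^ℓ/t^ℓ) exp(√(t²−ψ(t)²)/2) (−2ℓ/t + (1/2)(ψ(t)/t)² + O((ψ(t)/t)⁴) + O(ψ(t)²/t³) + O(1/t²)) as t → ∞. -/

import Mathlib

open Filter

noncomputable section

/-- `k_ℓ(s) = Σ_{j=0}^∞ s^{2j+1} / ((2(j+ℓ))!! (2j+1)!!)`. -/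
def kEven (ℓ : ℕ) (s : ℝ) : ℝ :=
  ∑' j : ℕ, s ^ (2 * j + 1) /
    (((2 * (j + ℓ)).doubleFactorial : ℝ) * ((2 * j + 1).doubleFactorial : ℝ))

/-- `k̃_ℓ(r,t) = t k_{ℓ+1}(√(t²−r²)/2) − 2 k_ℓ(√(t²−r²)/2)`. -/
def kTilde (ℓ : ℕ) (r t : ℝ) : ℝ :=
  t * kEven (ℓ + 1) (Real.sqrt (t ^ 2 - r ^ 2) / 2)
    - 2 * kEven ℓ (Real.sqrt (t ^ 2 - r ^ 2) / 2)

/-!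
The series satisfies `k_m = (2m+1) k_{m+1} + s/(2m+2)!! + s² k_{m+2}`, with `k_0 = sinh` and
`s k_1 = cosh - 1`; a two-step induction then gives
`k_ℓ(s) = e^s/(2 s^ℓ) (1 - ℓ(ℓ-1)/(2s)) + O(e^s/s^{ℓ+2})`.
Write `√(t² - r²)/2 = q t/2` with `q² = 1 - (r/t)²`. The two-term approximations of
`t k_{ℓ+1} - 2 k_ℓ` then combine exactly into `(2^ℓ/t^ℓ) e^{qt/2} (-2ℓ/t + (1-q²)/2)` plus one term
of order `(1-q)²` and one of order `(1-q)/t`, and `1 - q ≤ 1 - q² = (r/t)²`.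
-/

open Nat Real Asymptotics

lemma doubleFactorial_two_mul_le_of_le {m n : ℕ} (h : m ≤ n) : (2 * m)‼ ≤ (2 * n)‼ := by
  rw [doubleFactorial_two_mul, doubleFactorial_two_mul]
  exact Nat.mul_le_mul (Nat.pow_le_pow_right two_pos h) (factorial_le h)

lemma abs_kEven_term_le (ℓ j : ℕ) (s : ℝ) :
    |s ^ (2 * j + 1) / ((2 * (j + ℓ))‼ * (2 * j + 1)‼ : ℝ)|
      ≤ |s| ^ (2 * j + 1) / (2 * j + 1)! := by
  have hden : ((2 * j + 1)! : ℝ) ≤ (2 * (j + ℓ))‼ * (2 * j + 1)‼ := by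
    rw [factorial_eq_mul_doubleFactorial, mul_comm]
    exact_mod_cast Nat.mul_le_mul_right _ (doubleFactorial_two_mul_le_of_le (j.le_add_right ℓ))
  have hpos : (0 : ℝ) < (2 * (j + ℓ))‼ * (2 * j + 1)‼ := by positivity
  rw [abs_div, abs_pow, abs_of_pos hpos]
  exact div_le_div_of_nonneg_left (by positivity) (by positivity) hden

lemma hasSum_kEven (ℓ : ℕ) (s : ℝ) :
    HasSum (fun j : ℕ => s ^ (2 * j + 1) / ((2 * (j + ℓ))‼ * (2 * j + 1)‼ : ℝ)) (kEven ℓ s) :=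
  (Summable.of_norm_bounded (Real.hasSum_sinh |s|).summable (abs_kEven_term_le ℓ · s)).hasSum

lemma kEven_zero_eq_sinh (s : ℝ) : kEven 0 s = sinh s := by
  refine (hasSum_kEven 0 s).unique ((Real.hasSum_sinh s).congr_fun fun j => ?_)
  rw [factorial_eq_mul_doubleFactorial, add_zero]
  push_cast; ring

lemma mul_kEven_one (s : ℝ) : s * kEven 1 s = cosh s - 1 := by
  have h := (hasSum_nat_add_iff' 1).mpr (Real.hasSum_cosh s)
  simp only [Finset.sum_range_one, mul_zero, pow_zero, factorial_zero, cast_one, div_one] at h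
  refine ((hasSum_kEven 1 s).mul_left s).unique (h.congr_fun fun j => ?_)
  rw [show 2 * (j + 1) = 2 * j + 1 + 1 by ring, factorial_eq_mul_doubleFactorial,
    show 2 * j + 1 + 1 = 2 * (j + 1) by ring, pow_succ]
  push_cast; ring

lemma kEven_eq_add (m : ℕ) (s : ℝ) :
    kEven m s = (2 * m + 1) * kEven (m + 1) s + s / (2 * (m + 1))‼ + s ^ 2 * kEven (m + 2) s := by
  let u : ℕ → ℝ := fun j =>
    (2 * j + 1) * (s ^ (2 * j + 1) / ((2 * (j + (m + 1)))‼ * (2 * j + 1)‼ : ℝ))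
  have hu : HasSum (fun j => u (j + 1)) (s ^ 2 * kEven (m + 2) s) := by
    refine ((hasSum_kEven (m + 2) s).mul_left (s ^ 2)).congr_fun fun j => ?_
    simp only [u]
    rw [show 2 * (j + 1) + 1 = 2 * j + 1 + 2 by ring, doubleFactorial_add_two,
      show j + 1 + (m + 1) = j + (m + 2) by ring]
    push_cast; field_simp; ring
  have hsum := ((hasSum_kEven (m + 1) s).mul_left (2 * (m : ℝ) + 1)).add hu.zero_add
  refine ((hasSum_kEven m s).unique (hsum.congr_fun fun j => ?_)).trans ?_
  · simp only [u]
    rw [show 2 * (j + (m + 1)) = 2 * (j + m) + 2 by ring, doubleFactorial_add_two]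
    push_cast; field_simp; ring
  · simp [u]; ring

def kEvenApprox (ℓ : ℕ) (s : ℝ) : ℝ := exp s / (2 * s ^ ℓ) * (1 - ℓ * (ℓ - 1) / (2 * s))

lemma isBigO_exp_div_pow_of_abs_le {f : ℝ → ℝ} {c : ℝ} (hf : ∀ᶠ s in atTop, |f s| ≤ c) (n : ℕ) :
    f =O[atTop] fun s => exp s / s ^ n := by
  have hf1 : f =O[atTop] fun _ => (1 : ℝ) :=
    IsBigO.of_bound c (by filter_upwards [hf] with s hs; simpa using hs)
  refine hf1.trans (IsBigO.of_bound 1 ?_)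
  filter_upwards [(tendsto_exp_div_pow_atTop n).eventually_ge_atTop 1] with s hs
  rw [norm_one, one_mul, Real.norm_of_nonneg (by linarith)]
  exact hs

lemma inv_sq_isBigO_inv : (fun s : ℝ => (s ^ 2)⁻¹) =O[atTop] fun s => s⁻¹ := by
  refine IsBigO.of_bound 1 ?_
  filter_upwards [eventually_ge_atTop 1] with s hs
  rw [one_mul, norm_inv, norm_inv, norm_pow, Real.norm_of_nonneg (by linarith)]
  exact inv_anti₀ (by linarith) (by nlinarith)

lemma kEvenApprox_eq_add (n : ℕ) {s : ℝ} (hs : s ≠ 0) :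
    kEvenApprox n s = (2 * n + 1) * kEvenApprox (n + 1) s
      + s ^ 2 * (kEvenApprox (n + 2) s
        + (2 * n + 1) * (n + 1) * n / 4 * (exp s / s ^ (n + 4))) := by
  unfold kEvenApprox
  push_cast
  field_simp
  ring

theorem kEven_sub_kEvenApprox_isBigO :
    ∀ ℓ : ℕ, (fun s => kEven ℓ s - kEvenApprox ℓ s) =O[atTop] fun s => exp s / s ^ (ℓ + 2)
  | 0 => by
    refine isBigO_exp_div_pow_of_abs_le (c := 1) ?_ _
    filter_upwards [eventually_ge_atTop 0] with s hs
    have h : kEven 0 s - kEvenApprox 0 s = -(exp (-s) / 2) := by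
      rw [kEven_zero_eq_sinh, sinh_eq, kEvenApprox]; push_cast; ring
    rw [h, abs_neg, abs_of_pos (by positivity)]
    linarith [exp_le_one_iff.mpr (neg_nonpos.mpr hs)]
  | 1 => by
    refine isBigO_exp_div_pow_of_abs_le (c := 1) ?_ _
    filter_upwards [eventually_ge_atTop 1] with s hs
    have h : kEven 1 s - kEvenApprox 1 s = (exp (-s) / 2 - 1) / s := by
      rw [← mul_div_cancel_left₀ (kEven 1 s) (by positivity : s ≠ 0), mul_kEven_one, cosh_eq,
        kEvenApprox]
      push_cast; field_simp; ring
    have h1 : exp (-s) ≤ 1 := exp_le_one_iff.mpr (by linarith)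
    rw [h, abs_div, abs_of_pos (by positivity : 0 < s), div_le_one (by positivity), abs_le]
    constructor <;> linarith [exp_pos (-s)]
  | n + 2 => by
    -- subtract the recurrences `kEven_eq_add` and `kEvenApprox_eq_add` and divide by `s²`
    have hn : (fun s => (kEven n s - kEvenApprox n s) * (s ^ 2)⁻¹) =O[atTop]
        fun s => exp s / s ^ (n + 4) :=
      ((kEven_sub_kEvenApprox_isBigO n).mul (isBigO_refl _ atTop)).congr_right fun s => by ring
    have hn1 : (fun s => (2 * n + 1 : ℝ) * ((kEven (n + 1) s - kEvenApprox (n + 1) s) * (s ^ 2)⁻¹))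
        =O[atTop] fun s => exp s / s ^ (n + 4) :=
      (((kEven_sub_kEvenApprox_isBigO (n + 1)).mul inv_sq_isBigO_inv).const_mul_left _).congr_right
        fun s => by ring
    have hmain := (isBigO_refl (fun s => exp s / s ^ (n + 4)) atTop).const_mul_left
      ((2 * n + 1) * (n + 1) * n / 4 : ℝ)
    have hrest : (fun s : ℝ => 1 / (((2 * (n + 1))‼ : ℝ) * s)) =O[atTop]
        fun s => exp s / s ^ (n + 4) := by
      refine isBigO_exp_div_pow_of_abs_le (c := 1) ?_ _
      filter_upwards [eventually_ge_atTop 1] with s hs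
      have h1 : (1 : ℝ) ≤ (2 * (n + 1))‼ := by exact_mod_cast doubleFactorial_pos _
      rw [abs_of_pos (by positivity), div_le_one (by positivity)]
      nlinarith
    have hsum := ((hn.sub hn1).add hmain).sub hrest
    refine hsum.congr' ?_ (Eventually.of_forall fun s => ?_)
    · filter_upwards [eventually_gt_atTop 0] with s hs
      rw [kEven_eq_add n s, kEvenApprox_eq_add n hs.ne']
      field_simp
      ring
    · ring

lemma kEvenApprox_combination_eq (ℓ : ℕ) {q t : ℝ} (hq : q ≠ 0) (ht : t ≠ 0) :
    t * kEvenApprox (ℓ + 1) (q * t / 2) - 2 * kEvenApprox ℓ (q * t / 2)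
      = 2 ^ ℓ / t ^ ℓ * exp (q * t / 2) * (-(2 * ℓ) / t + (1 - q ^ 2) / 2
        + (1 - q) * ((1 - q ^ (ℓ + 1)) + (1 - q ^ (ℓ + 2))) / (2 * q ^ (ℓ + 1))
        - ℓ * (2 * (1 - q ^ (ℓ + 2)) + (ℓ - 1) * (1 - q)) / (t * q ^ (ℓ + 2))) := by
  unfold kEvenApprox
  push_cast
  simp only [div_pow, mul_pow]
  field_simp
  ring

lemma one_sub_pow_le_mul_one_sub {q : ℝ} (hq : -1 ≤ q) (m : ℕ) :
    1 - q ^ m ≤ m * (1 - q) := by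
  have := one_add_mul_le_pow (a := q - 1) (by linarith) m
  simp only [add_sub_cancel] at this
  linarith

lemma inv_pow_le_two_pow {q : ℝ} (hq : 1 / 2 ≤ q) (m : ℕ) : (q ^ m)⁻¹ ≤ 2 ^ m := by
  rw [inv_le_comm₀ (by positivity) (by positivity), ← inv_pow]
  exact pow_le_pow_left₀ (by norm_num) (by simpa using hq) m

lemma abs_kEvenApprox_combination_sub_le (ℓ : ℕ) {q t : ℝ} (hq : 1 / 2 ≤ q) (hq1 : q ≤ 1)
    (ht : 0 < t) :
    |t * kEvenApprox (ℓ + 1) (q * t / 2) - 2 * kEvenApprox ℓ (q * t / 2)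
        - 2 ^ ℓ / t ^ ℓ * exp (q * t / 2) * (-(2 * ℓ) / t + (1 - q ^ 2) / 2)|
      ≤ 2 ^ ℓ / t ^ ℓ * exp (q * t / 2) *
        (2 ^ ℓ * (2 * ℓ + 3) * (1 - q ^ 2) ^ 2
          + ℓ * 2 ^ (ℓ + 2) * (3 * ℓ + 5) * (1 - q ^ 2) / t) := by
  have hq0 : 0 < q := by linarith
  have hpow (m : ℕ) : 0 ≤ 1 - q ^ m ∧ 1 - q ^ m ≤ m * (1 - q) :=
    ⟨sub_nonneg.mpr (pow_le_one₀ hq0.le hq1), one_sub_pow_le_mul_one_sub (by linarith) m⟩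
  have hy : 1 - q ≤ 1 - q ^ 2 := by nlinarith
  have hA : |(1 - q) * ((1 - q ^ (ℓ + 1)) + (1 - q ^ (ℓ + 2))) / (2 * q ^ (ℓ + 1))|
      ≤ 2 ^ ℓ * (2 * ℓ + 3) * (1 - q ^ 2) ^ 2 := by
    obtain ⟨h1, h1'⟩ := hpow (ℓ + 1)
    obtain ⟨h2, h2'⟩ := hpow (ℓ + 2)
    push_cast at h1' h2'
    rw [abs_of_nonneg (by have := sub_nonneg.mpr hq1; positivity), div_eq_mul_inv, mul_inv,
      mul_comm (2 : ℝ)⁻¹]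
    calc (1 - q) * ((1 - q ^ (ℓ + 1)) + (1 - q ^ (ℓ + 2))) * ((q ^ (ℓ + 1))⁻¹ * 2⁻¹)
        ≤ (1 - q) * ((2 * ℓ + 3) * (1 - q)) * (2 ^ (ℓ + 1) * 2⁻¹) := by
          gcongr
          · linarith
          · exact inv_pow_le_two_pow hq _
      _ = 2 ^ ℓ * (2 * ℓ + 3) * (1 - q) ^ 2 := by ring
      _ ≤ 2 ^ ℓ * (2 * ℓ + 3) * (1 - q ^ 2) ^ 2 := by gcongr
  have hB : |ℓ * (2 * (1 - q ^ (ℓ + 2)) + (ℓ - 1) * (1 - q)) / (t * q ^ (ℓ + 2))|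
      ≤ ℓ * 2 ^ (ℓ + 2) * (3 * ℓ + 5) * (1 - q ^ 2) / t := by
    obtain ⟨h2, h2'⟩ := hpow (ℓ + 2)
    push_cast at h2'
    have hℓ : 0 ≤ (ℓ : ℝ) * (1 - q) := mul_nonneg ℓ.cast_nonneg (by linarith)
    have hN : |2 * (1 - q ^ (ℓ + 2)) + (ℓ - 1) * (1 - q)| ≤ (3 * ℓ + 5) * (1 - q ^ 2) := by
      rw [abs_le]; constructor <;> nlinarith
    rw [abs_div, abs_mul, abs_mul, abs_of_nonneg ℓ.cast_nonneg, abs_of_pos ht,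
      abs_of_pos (pow_pos hq0 _), mul_comm t, ← div_div, div_eq_mul_inv _ (q ^ _)]
    calc ℓ * |2 * (1 - q ^ (ℓ + 2)) + (ℓ - 1) * (1 - q)| * (q ^ (ℓ + 2))⁻¹ / t
        ≤ ℓ * ((3 * ℓ + 5) * (1 - q ^ 2)) * 2 ^ (ℓ + 2) / t := by
          gcongr
          · exact mul_nonneg ℓ.cast_nonneg (mul_nonneg (by positivity) (by linarith))
          · exact inv_pow_le_two_pow hq _
      _ = ℓ * 2 ^ (ℓ + 2) * (3 * ℓ + 5) * (1 - q ^ 2) / t := by ring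
  rw [kEvenApprox_combination_eq ℓ hq0.ne' ht.ne', ← mul_sub, abs_mul, abs_of_pos (by positivity),
    add_sub_assoc, add_sub_cancel_left]
  gcongr
  exact (abs_sub _ _).trans (add_le_add hA hB)

lemma exists_abs_kEven_sub_kEvenApprox_le (ℓ : ℕ) :
    ∃ C > (0 : ℝ), ∃ T > (0 : ℝ), ∀ q t : ℝ, 1 / 2 ≤ q → T ≤ t →
      |kEven ℓ (q * t / 2) - kEvenApprox ℓ (q * t / 2)| ≤ C * exp (q * t / 2) / t ^ (ℓ + 2) := by
  obtain ⟨C, hC, hbound⟩ := (kEven_sub_kEvenApprox_isBigO ℓ).exists_pos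
  obtain ⟨S, hS⟩ := eventually_atTop.mp (hbound.bound.and (eventually_gt_atTop 0))
  refine ⟨C * 4 ^ (ℓ + 2), by positivity, max (4 * S) 1, by positivity, fun q t hq ht => ?_⟩
  have ht0 : 0 < t := by linarith [le_max_right (4 * S) 1]
  have hst : t / 4 ≤ q * t / 2 := by nlinarith
  obtain ⟨h, hs0⟩ := hS (q * t / 2) (by linarith [le_max_left (4 * S) 1])
  rw [Real.norm_eq_abs, Real.norm_of_nonneg (by positivity)] at h
  calc _ ≤ C * (exp (q * t / 2) / (q * t / 2) ^ (ℓ + 2)) := h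
    _ ≤ C * (exp (q * t / 2) / (t / 4) ^ (ℓ + 2)) := by gcongr
    _ = C * 4 ^ (ℓ + 2) * exp (q * t / 2) / t ^ (ℓ + 2) := by rw [div_pow]; field_simp

lemma exists_abs_kEven_combination_sub_le (ℓ : ℕ) :
    ∃ C > (0 : ℝ), ∃ T > (0 : ℝ), ∀ q t : ℝ, 1 / 2 ≤ q → q ≤ 1 → T ≤ t →
      |t * kEven (ℓ + 1) (q * t / 2) - 2 * kEven ℓ (q * t / 2)
          - 2 ^ ℓ / t ^ ℓ * exp (q * t / 2) * (-(2 * ℓ) / t + (1 - q ^ 2) / 2)|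
        ≤ 2 ^ ℓ / t ^ ℓ * exp (q * t / 2) *
            (C * ((1 - q ^ 2) ^ 2 + (1 - q ^ 2) / t + 1 / t ^ 2)) := by
  obtain ⟨C₀, hC₀, T₀, hT₀, h₀⟩ := exists_abs_kEven_sub_kEvenApprox_le ℓ
  obtain ⟨C₁, hC₁, T₁, hT₁, h₁⟩ := exists_abs_kEven_sub_kEvenApprox_le (ℓ + 1)
  set A : ℝ := 2 ^ ℓ * (2 * ℓ + 3)
  set B : ℝ := ℓ * 2 ^ (ℓ + 2) * (3 * ℓ + 5)
  set E : ℝ := (C₁ + 2 * C₀) / 2 ^ ℓ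
  refine ⟨A + B + E, by positivity, max T₀ T₁, lt_max_of_lt_left hT₀, fun q t hq hq1 ht => ?_⟩
  have ht0 : 0 < t := lt_of_lt_of_le hT₀ (le_of_max_le_left ht)
  have hy : 0 ≤ 1 - q ^ 2 := by nlinarith
  set P := 2 ^ ℓ / t ^ ℓ * exp (q * t / 2)
  have e₀ := h₀ q t hq (le_of_max_le_left ht)
  have e₁ := h₁ q t hq (le_of_max_le_right ht)
  have eA := abs_kEvenApprox_combination_sub_le ℓ hq hq1 ht0
  calc _ = |t * (kEven (ℓ + 1) (q * t / 2) - kEvenApprox (ℓ + 1) (q * t / 2))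
          - 2 * (kEven ℓ (q * t / 2) - kEvenApprox ℓ (q * t / 2))
          + (t * kEvenApprox (ℓ + 1) (q * t / 2) - 2 * kEvenApprox ℓ (q * t / 2)
            - P * (-(2 * ℓ) / t + (1 - q ^ 2) / 2))| := by congr 1; ring
    _ ≤ t * (C₁ * exp (q * t / 2) / t ^ (ℓ + 1 + 2)) + 2 * (C₀ * exp (q * t / 2) / t ^ (ℓ + 2))
          + P * (A * (1 - q ^ 2) ^ 2 + B * (1 - q ^ 2) / t) := by
        refine (abs_add_le _ _).trans (add_le_add ((abs_sub _ _).trans (add_le_add ?_ ?_)) eA)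
        · rw [abs_mul, abs_of_pos ht0]; gcongr
        · rw [abs_mul, abs_two]; gcongr
    _ = P * (A * (1 - q ^ 2) ^ 2 + B * ((1 - q ^ 2) / t) + E * (1 / t ^ 2)) := by
        simp only [P, E]; field_simp; ring
    _ ≤ P * ((A + B + E) * ((1 - q ^ 2) ^ 2 + (1 - q ^ 2) / t + 1 / t ^ 2)) := by
        gcongr
        nlinarith [show 0 ≤ A by positivity, show 0 ≤ B by positivity, show 0 ≤ E by positivity,
          show 0 ≤ (1 - q ^ 2) / t by positivity, show 0 ≤ 1 / t ^ 2 by positivity]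

theorem stmt17 (ℓ : ℕ)
    (ψ : ℝ → ℝ)
    (hψ : Tendsto (fun t => ψ t / t) atTop (nhds 0)) :
    ∃ C > (0:ℝ), ∃ T > (0:ℝ), ∀ t ≥ T,
      |kTilde ℓ (ψ t) t -
          (2 : ℝ) ^ ℓ / t ^ ℓ * Real.exp (Real.sqrt (t ^ 2 - ψ t ^ 2) / 2) *
            (-(2 * (ℓ : ℝ)) / t + (1 / 2) * (ψ t / t) ^ 2)|
        ≤ (2 : ℝ) ^ ℓ / t ^ ℓ * Real.exp (Real.sqrt (t ^ 2 - ψ t ^ 2) / 2) *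
            (C * ((ψ t / t) ^ 4 + ψ t ^ 2 / t ^ 3 + 1 / t ^ 2)) := by
  obtain ⟨C, hC, T, hT, h⟩ := exists_abs_kEven_combination_sub_le ℓ
  obtain ⟨T₁, hT₁⟩ :=
    eventually_atTop.mp (hψ.eventually (Metric.closedBall_mem_nhds 0 one_half_pos))
  refine ⟨C, hC, max T T₁, lt_max_of_lt_left hT, fun t ht => ?_⟩
  have ht0 : 0 < t := lt_of_lt_of_le hT (le_of_max_le_left ht)
  have hx : (ψ t / t) ^ 2 ≤ 1 / 4 := by
    have := hT₁ t (le_of_max_le_right ht)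
    rw [Real.dist_0_eq_abs] at this
    nlinarith [abs_nonneg (ψ t / t), sq_abs (ψ t / t)]
  set q := √(t ^ 2 - ψ t ^ 2) / t
  have hs : q * t / 2 = √(t ^ 2 - ψ t ^ 2) / 2 := by simp only [q]; field_simp
  have hq : 1 - q ^ 2 = (ψ t / t) ^ 2 := by
    rw [div_pow, div_pow, Real.sq_sqrt]
    · field_simp; ring
    · rw [div_pow, div_le_iff₀ (by positivity)] at hx
      nlinarith
  have hq0 : 0 ≤ q := by positivity
  have hbound := h q t (by nlinarith) (by nlinarith) (le_of_max_le_left ht)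
  rw [hs, hq] at hbound
  rw [kTilde]
  convert hbound using 4 <;> ring
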